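/- Quadratic smallness of remainders with subcritical growth (Lemma D.1): Let N ≥ 2 and M ≥ 1 be integers, and let p be a real number with 2 ≤ p < ∞, and additionally p ≤ 2N/(N-2) if N ≥ 3. Let Ω ⊂ ℝ^N be a bounded open set with smooth boundary and let h : Ω × ℝ^M → ℝ be continuous and satisfy: (i) for every ε' > 0 there exists ρ > 0 such that |h(x,y)| ≤ ε' |y|² whenever x ∈ Ω and 0 < |y| ≤ ρ; (ii) there exists C > 0 such that h(x,y) ≥ -C |y|² (|y|^{p-2} + 1) for all x ∈ Ω and y ∈ ℝ^M. Then for every a > 0 there exists δ > 0 such that for every v ∈ C_c^∞(Ω, ℝ^M) with 0 < ∫_Ω (|∇v|² + |v|²) dx ≤ δ², one has ∫_Ω h(x, v(x)) dx ≥ -a ∫_Ω (|∇v|² + |v|²) dx. -/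

import Mathlib

open Set MeasureTheory

noncomputable section

/-- Squared Frobenius norm of the Jacobian of `v` at `x`. -/
def gradSq {N M : ℕ} (v : EuclideanSpace ℝ (Fin N) → EuclideanSpace ℝ (Fin M))
    (x : EuclideanSpace ℝ (Fin N)) : ℝ :=
  ∑ i, ‖fderiv ℝ (fun y => v y i) x‖ ^ 2

/-- The squared `H¹` norm of a perturbation on `Ω`. -/
def H1 {N M : ℕ} (Ω : Set (EuclideanSpace ℝ (Fin N)))
    (v : EuclideanSpace ℝ (Fin N) → EuclideanSpace ℝ (Fin M)) : ℝ :=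
  ∫ x in Ω, (gradSq v x + ‖v x‖ ^ 2)

open scoped NNReal ENNReal

lemma gradSq_nonneg {N M : ℕ} (v : EuclideanSpace ℝ (Fin N) → EuclideanSpace ℝ (Fin M))
    (x : EuclideanSpace ℝ (Fin N)) : 0 ≤ gradSq v x :=
  Finset.sum_nonneg fun _ _ => sq_nonneg _

lemma comp_fderiv' {N M : ℕ} {v : EuclideanSpace ℝ (Fin N) → EuclideanSpace ℝ (Fin M)}
    (hv : ContDiff ℝ (⊤:ℕ∞) v) (i : Fin M) (x : EuclideanSpace ℝ (Fin N)) :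
    fderiv ℝ (fun y => v y i) x = (EuclideanSpace.proj (𝕜 := ℝ) i).comp (fderiv ℝ v x) := by
  have : (fun y => v y i) = (EuclideanSpace.proj (𝕜 := ℝ) i) ∘ v := rfl
  rw [this, fderiv_comp x (EuclideanSpace.proj (𝕜 := ℝ) i).differentiableAt
    (hv.differentiable (by simp) x), ContinuousLinearMap.fderiv]

lemma opnorm_sq_le_gradSq {N M : ℕ} {v : EuclideanSpace ℝ (Fin N) → EuclideanSpace ℝ (Fin M)}
    (hv : ContDiff ℝ (⊤:ℕ∞) v) (x : EuclideanSpace ℝ (Fin N)) :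
    ‖fderiv ℝ v x‖ ^ 2 ≤ gradSq v x := by
  have h0 : 0 ≤ gradSq v x := gradSq_nonneg v x
  have hb : ‖fderiv ℝ v x‖ ≤ Real.sqrt (gradSq v x) := by
    apply ContinuousLinearMap.opNorm_le_bound _ (Real.sqrt_nonneg _)
    intro z
    have h1 : ‖fderiv ℝ v x z‖ ^ 2 ≤ gradSq v x * ‖z‖ ^ 2 := by
      rw [EuclideanSpace.norm_eq]
      rw [Real.sq_sqrt (by positivity)]
      rw [gradSq, Finset.sum_mul]
      apply Finset.sum_le_sum
      intro i _
      have : fderiv ℝ v x z i = fderiv ℝ (fun y => v y i) x z := by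
        rw [comp_fderiv' hv i x]; rfl
      rw [Real.norm_eq_abs, sq_abs, this]
      calc (fderiv ℝ (fun y => v y i) x z) ^ 2
          = ‖(fderiv ℝ (fun y => v y i) x) z‖ ^ 2 := by
            rw [Real.norm_eq_abs, sq_abs]
        _ ≤ (‖fderiv ℝ (fun y => v y i) x‖ * ‖z‖) ^ 2 := by
            apply pow_le_pow_left₀ (norm_nonneg _)
            exact (fderiv ℝ (fun y => v y i) x).le_opNorm z
        _ = ‖fderiv ℝ (fun y => v y i) x‖ ^ 2 * ‖z‖ ^ 2 := by ring
    calc ‖fderiv ℝ v x z‖ = Real.sqrt (‖fderiv ℝ v x z‖ ^ 2) := by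
          rw [Real.sqrt_sq (norm_nonneg _)]
      _ ≤ Real.sqrt (gradSq v x * ‖z‖ ^ 2) := Real.sqrt_le_sqrt h1
      _ = Real.sqrt (gradSq v x) * ‖z‖ := by
          rw [Real.sqrt_mul h0, Real.sqrt_sq (norm_nonneg _)]
  calc ‖fderiv ℝ v x‖ ^ 2 ≤ Real.sqrt (gradSq v x) ^ 2 :=
        pow_le_pow_left₀ (norm_nonneg _) hb 2
    _ = gradSq v x := Real.sq_sqrt h0

lemma gradSq_continuous {N M : ℕ} {v : EuclideanSpace ℝ (Fin N) → EuclideanSpace ℝ (Fin M)}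
    (hv : ContDiff ℝ (⊤:ℕ∞) v) : Continuous (gradSq v) := by
  apply continuous_finset_sum
  intro i _
  have : ContDiff ℝ (⊤:ℕ∞) (fun y => v y i) :=
    (EuclideanSpace.proj (𝕜 := ℝ) i).contDiff.comp hv
  exact ((this.continuous_fderiv (by simp)).norm).pow 2

lemma gradSq_zero_of_nmem {N M : ℕ} {v : EuclideanSpace ℝ (Fin N) → EuclideanSpace ℝ (Fin M)}
    {x : EuclideanSpace ℝ (Fin N)} (hx : x ∉ tsupport v) : gradSq v x = 0 := by
  apply Finset.sum_eq_zero
  intro i _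
  have hsub : tsupport (fun y => v y i) ⊆ tsupport v :=
    closure_mono (Function.support_comp_subset (g := fun w : EuclideanSpace ℝ (Fin M) => w i)
      rfl v)
  have : x ∉ tsupport (fun y => v y i) := fun hc => hx (hsub hc)
  have h0 : fderiv ℝ (fun y => v y i) x = 0 := by
    have := support_fderiv_subset (𝕜 := ℝ) (f := fun y => v y i)
    by_contra hne
    exact this.trans hsub (by simpa [Function.mem_support] using hne) |> hx
  simp [h0]


lemma sobolev_pkg {N M : ℕ} (Ω : Set (EuclideanSpace ℝ (Fin N)))
    (hΩb : Bornology.IsBounded Ω) (q p₀ : ℝ≥0)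
    (hq : 2 < (q:ℝ)) (hp₀1 : 1 ≤ p₀) (hp₀2 : (p₀:ℝ≥0∞) ≤ 2) (hp₀N : (p₀:ℝ) < N)
    (hpq : (p₀:ℝ)⁻¹ - (N:ℝ)⁻¹ ≤ (q:ℝ)⁻¹) :
    ∃ Cs : ℝ, 0 < Cs ∧ ∀ v : EuclideanSpace ℝ (Fin N) → EuclideanSpace ℝ (Fin M),
      ContDiff ℝ (⊤:ℕ∞) v → HasCompactSupport v → tsupport v ⊆ Ω →
      ∫ x in Ω, ‖v x‖ ^ (q:ℝ) ≤
        Cs * (∫ x in Ω, (gradSq v x + ‖v x‖ ^ 2)) ^ ((q:ℝ)/2) := by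
  have hfr : Module.finrank ℝ (EuclideanSpace ℝ (Fin N)) = N := finrank_euclideanSpace_fin
  set μ : Measure (EuclideanSpace ℝ (Fin N)) := volume with hμ
  have hΩfin : μ Ω < ⊤ := hΩb.measure_lt_top
  set K1 : ℝ≥0 := eLpNormLESNormFDerivOfLeConst (EuclideanSpace ℝ (Fin M)) μ Ω p₀ q with hK1
  set e2 : ℝ := (p₀:ℝ)⁻¹ - 2⁻¹ with he2
  have he2nn : 0 ≤ e2 := by
    have h2 : (p₀:ℝ) ≤ 2 := by exact_mod_cast hp₀2
    have hp0 : (0:ℝ) < p₀ := by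
      have : (0:ℝ≥0) < p₀ := lt_of_lt_of_le one_pos hp₀1
      exact_mod_cast this
    rw [he2, sub_nonneg]
    exact inv_anti₀ hp0 h2
  set K2 : ℝ≥0∞ := μ Ω ^ e2 with hK2
  have hK2ne : K2 ≠ ⊤ := ENNReal.rpow_ne_top_of_nonneg he2nn hΩfin.ne
  have hKne : (K1 : ℝ≥0∞) * K2 ≠ ⊤ := ENNReal.mul_ne_top ENNReal.coe_ne_top hK2ne
  have hqpos : (0:ℝ) < q := by linarith
  refine ⟨(((K1:ℝ≥0∞) * K2).toReal) ^ (q:ℝ) + 1, by positivity, ?_⟩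
  intro v hv hvc hvs
  have hvdiff : ContDiff ℝ 1 v := hv.of_le (mod_cast le_top)
  have hsupp : Function.support v ⊆ Ω := (subset_tsupport v).trans hvs
  have hfd_supp : Function.support (fderiv ℝ v) ⊆ Ω :=
    (support_fderiv_subset ℝ).trans hvs
  -- Step 1: Sobolev inequality
  have h2p : p₀ < Module.finrank ℝ (EuclideanSpace ℝ (Fin N)) := by
    rw [hfr]; exact_mod_cast hp₀N
  have hpq' : (p₀:ℝ)⁻¹ - (Module.finrank ℝ (EuclideanSpace ℝ (Fin N)) : ℝ)⁻¹ ≤ (q:ℝ)⁻¹ := by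
    rw [hfr]; exact hpq
  have S1 : eLpNorm v q μ ≤ K1 * eLpNorm (fderiv ℝ v) p₀ μ :=
    eLpNorm_le_eLpNorm_fderiv_of_le μ hvdiff hsupp hp₀1 h2p hpq' hΩb
  -- Step 2: Hölder
  have hfd_cont : Continuous (fderiv ℝ v) := hv.continuous_fderiv (by simp)
  have S2 : eLpNorm (fderiv ℝ v) p₀ μ ≤ eLpNorm (fderiv ℝ v) 2 μ * K2 := by
    rw [← eLpNorm_restrict_eq_of_support_subset (f := fderiv ℝ v) hfd_supp (p := (p₀ : ℝ≥0∞)),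
        ← eLpNorm_restrict_eq_of_support_subset (f := fderiv ℝ v) hfd_supp (p := (2 : ℝ≥0∞))]
    have := eLpNorm_le_eLpNorm_mul_rpow_measure_univ (μ := μ.restrict Ω) (p := (p₀:ℝ≥0∞))
      (q := (2:ℝ≥0∞)) hp₀2 (hfd_cont.aestronglyMeasurable.restrict (μ := μ) (s := Ω))
    simpa [Measure.restrict_apply_univ, ENNReal.coe_toReal, ENNReal.toReal_ofNat] using this
  -- integrability facts
  have hgs_cont : Continuous (gradSq v) := gradSq_continuous hv
  have hgs_hcs : HasCompactSupport (gradSq v) :=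
    HasCompactSupport.intro hvc fun x hx => gradSq_zero_of_nmem hx
  have hgs_int : Integrable (gradSq v) μ := hgs_cont.integrable_of_hasCompactSupport hgs_hcs
  have hv2_cont : Continuous (fun x => ‖v x‖ ^ 2) := (hv.continuous.norm).pow 2
  have hv2_hcs : HasCompactSupport (fun x => ‖v x‖ ^ 2) :=
    hvc.comp_left (g := fun w : EuclideanSpace ℝ (Fin M) => ‖w‖ ^ 2) (by simp)
  have hv2_int : Integrable (fun x => ‖v x‖ ^ 2) μ :=
    hv2_cont.integrable_of_hasCompactSupport hv2_hcs
  -- Step 3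
  have S3 : eLpNorm (fderiv ℝ v) 2 μ ≤ (ENNReal.ofReal (∫ x, gradSq v x ∂μ)) ^ (1/2 : ℝ) := by
    rw [eLpNorm_eq_lintegral_rpow_enorm_toReal two_ne_zero ENNReal.ofNat_ne_top]
    apply ENNReal.rpow_le_rpow _ (by norm_num)
    calc ∫⁻ x, (‖fderiv ℝ v x‖₊ : ℝ≥0∞) ^ (2:ℝ≥0∞).toReal ∂μ
        ≤ ∫⁻ x, ENNReal.ofReal (gradSq v x) ∂μ := by
          apply lintegral_mono
          intro x
          show (‖fderiv ℝ v x‖₊ : ℝ≥0∞) ^ (2:ℝ≥0∞).toReal ≤ ENNReal.ofReal (gradSq v x)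
          rw [ENNReal.toReal_ofNat, ← enorm_eq_nnnorm, ← ofReal_norm,
            ENNReal.ofReal_rpow_of_nonneg (norm_nonneg _) (by norm_num)]
          apply ENNReal.ofReal_le_ofReal
          rw [Real.rpow_two]
          exact opnorm_sq_le_gradSq hv x
      _ = ENNReal.ofReal (∫ x, gradSq v x ∂μ) :=
          (ofReal_integral_eq_lintegral_ofReal hgs_int
            (ae_of_all _ (gradSq_nonneg v))).symm
  -- relating the integrals
  set I : ℝ := ∫ x in Ω, (gradSq v x + ‖v x‖ ^ 2) ∂μ with hI
  have hInn : 0 ≤ I :=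
    integral_nonneg fun x => add_nonneg (gradSq_nonneg v x) (sq_nonneg _)
  have hIg_eq : ∫ x in Ω, gradSq v x ∂μ = ∫ x, gradSq v x ∂μ :=
    setIntegral_eq_integral_of_forall_compl_eq_zero fun x hx =>
      gradSq_zero_of_nmem fun hc => hx (hvs hc)
  have hIg_le : ∫ x, gradSq v x ∂μ ≤ I := by
    rw [← hIg_eq, hI]
    apply integral_mono hgs_int.restrict ((hgs_int.add hv2_int).restrict)
    intro x
    simpa using sq_nonneg ‖v x‖
  -- full chain
  have Schain : eLpNorm v q μ ≤ ((K1:ℝ≥0∞) * K2) * (ENNReal.ofReal I) ^ (1/2:ℝ) := by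
    calc eLpNorm v q μ ≤ K1 * eLpNorm (fderiv ℝ v) p₀ μ := S1
      _ ≤ K1 * (eLpNorm (fderiv ℝ v) 2 μ * K2) := by gcongr
      _ ≤ K1 * ((ENNReal.ofReal (∫ x, gradSq v x ∂μ)) ^ (1/2:ℝ) * K2) := by gcongr
      _ ≤ K1 * ((ENNReal.ofReal I) ^ (1/2:ℝ) * K2) := by
          gcongr
      _ = ((K1:ℝ≥0∞) * K2) * (ENNReal.ofReal I) ^ (1/2:ℝ) := by ring
  -- LHS as eLpNorm
  have hq0 : (q:ℝ) ≠ 0 := ne_of_gt hqpos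
  have hLHS : ∫ x in Ω, ‖v x‖ ^ (q:ℝ) ∂μ = ((eLpNorm v q μ) ^ (q:ℝ)).toReal := by
    have h1 : ∫ x in Ω, ‖v x‖ ^ (q:ℝ) ∂μ = ∫ x, ‖v x‖ ^ (q:ℝ) ∂μ := by
      apply setIntegral_eq_integral_of_forall_compl_eq_zero
      intro x hx
      have : v x = 0 := by
        by_contra hc
        exact hx (hvs (subset_tsupport v hc))
      rw [this, norm_zero, Real.zero_rpow hq0]
    have hmeas : AEStronglyMeasurable (fun x => ‖v x‖ ^ (q:ℝ)) μ :=
      (hv.continuous.norm.rpow_const fun x => Or.inr hqpos.le).aestronglyMeasurable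
    rw [h1, integral_eq_lintegral_of_nonneg_ae
      (ae_of_all _ fun x => Real.rpow_nonneg (norm_nonneg _) _) hmeas,
      eLpNorm_eq_lintegral_rpow_enorm_toReal (by exact_mod_cast hq0) ENNReal.coe_ne_top,
      ENNReal.coe_toReal,
      ← ENNReal.rpow_mul, one_div, inv_mul_cancel₀ hq0, ENNReal.rpow_one]
    congr 1
    apply lintegral_congr
    intro x
    rw [← ofReal_norm, ENNReal.ofReal_rpow_of_nonneg (norm_nonneg _) hqpos.le]
  -- final estimate
  have hRHSne : (((K1:ℝ≥0∞) * K2) * (ENNReal.ofReal I) ^ (1/2:ℝ)) ^ (q:ℝ) ≠ ⊤ := by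
    apply ENNReal.rpow_ne_top_of_nonneg hqpos.le
    exact ENNReal.mul_ne_top hKne (ENNReal.rpow_ne_top_of_nonneg (by norm_num)
      ENNReal.ofReal_ne_top)
  calc ∫ x in Ω, ‖v x‖ ^ (q:ℝ) ∂μ = ((eLpNorm v q μ) ^ (q:ℝ)).toReal := hLHS
    _ ≤ ((((K1:ℝ≥0∞) * K2) * (ENNReal.ofReal I) ^ (1/2:ℝ)) ^ (q:ℝ)).toReal := by
        apply ENNReal.toReal_mono hRHSne
        exact ENNReal.rpow_le_rpow Schain hqpos.le
    _ = (((K1:ℝ≥0∞) * K2).toReal) ^ (q:ℝ) * I ^ ((q:ℝ)/2) := by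
        rw [ENNReal.mul_rpow_of_nonneg _ _ hqpos.le, ENNReal.toReal_mul,
          ← ENNReal.rpow_mul, ← ENNReal.toReal_rpow, ← ENNReal.toReal_rpow,
          ENNReal.toReal_ofReal hInn]
        ring_nf
    _ ≤ ((((K1:ℝ≥0∞) * K2).toReal) ^ (q:ℝ) + 1) * I ^ ((q:ℝ)/2) := by
        have : (0:ℝ) ≤ I ^ ((q:ℝ)/2) := Real.rpow_nonneg hInn _
        nlinarith [Real.rpow_nonneg (ENNReal.toReal_nonneg (a := (K1:ℝ≥0∞) * K2)) (q:ℝ)]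

lemma exponents (N : ℕ) (hN : 2 ≤ N) (p : ℝ) (hp : 2 ≤ p)
    (hpc : 3 ≤ N → p ≤ 2 * (N:ℝ) / ((N:ℝ) - 2)) :
    ∃ qR p₀R : ℝ, 2 < qR ∧ p ≤ qR ∧ 1 ≤ p₀R ∧ p₀R ≤ 2 ∧ p₀R < N ∧
      p₀R⁻¹ - (N:ℝ)⁻¹ ≤ qR⁻¹ := by
  have hN2 : (2:ℝ) ≤ N := by exact_mod_cast hN
  have hNpos : (0:ℝ) < N := by linarith
  by_cases h2 : N = 2
  · subst h2
    have h3 : (3:ℝ) ≤ max p 3 := le_max_right _ _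
    have hqpos : (0:ℝ) < max p 3 := by linarith
    have hqinv : (max p 3)⁻¹ ≤ 3⁻¹ := inv_anti₀ (by norm_num) h3
    have hqinvpos : (0:ℝ) < (max p 3)⁻¹ := by positivity
    have hsum : (0:ℝ) < (max p 3)⁻¹ + 2⁻¹ := by positivity
    refine ⟨max p 3, ((max p 3)⁻¹ + (2:ℝ)⁻¹)⁻¹, by linarith, le_max_left _ _, ?_, ?_, ?_, ?_⟩
    · rw [one_le_inv₀ hsum]; linarith
    · exact inv_le_of_inv_le₀ (by norm_num) (by norm_num)
    · push_cast
      exact inv_lt_of_inv_lt₀ (by norm_num) (by norm_num)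
    · rw [inv_inv]; push_cast; linarith
  · have hN3 : 3 ≤ N := by omega
    have hN3' : (3:ℝ) ≤ N := by exact_mod_cast hN3
    have hden : (0:ℝ) < (N:ℝ) - 2 := by linarith
    set qR : ℝ := 2 * N / ((N:ℝ) - 2) with hqR
    have hq2 : 2 < qR := by
      rw [hqR, lt_div_iff₀ hden]; ring_nf; linarith
    refine ⟨qR, 2, hq2, hpc hN3, one_le_two, le_refl _, by linarith, ?_⟩
    have h1 : qR⁻¹ = ((N:ℝ) - 2) / (2 * N) := by
      rw [hqR]; field_simp
    have h2' : (2:ℝ)⁻¹ - (N:ℝ)⁻¹ = ((N:ℝ) - 2) / (2 * N) := by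
      field_simp
    rw [h1, h2']


/-- **Quadratic smallness of remainders with subcritical growth** (Lemma D.1):
if `h : Ω × ℝ^M → ℝ` is continuous, `o(|y|²)` as `y → 0` uniformly in `x`, and
bounded below by `-C |y|² (|y|^{p-2} + 1)` with subcritical `p`, then for every
`a > 0` there is `δ > 0` such that `∫_Ω h(x, v(x)) dx ≥ -a ‖v‖_{H¹}²` for all
`v ∈ C_c^∞(Ω, ℝ^M)` with `0 < ‖v‖_{H¹} ≤ δ`. -/
theorem remainder_quadratic_smallness
    (N M : ℕ) (hN : 2 ≤ N) (hM : 1 ≤ M)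
    (p : ℝ) (hp : 2 ≤ p) (hpc : 3 ≤ N → p ≤ 2 * (N:ℝ) / ((N:ℝ) - 2))
    (Ω : Set (EuclideanSpace ℝ (Fin N)))
    (hΩo : IsOpen Ω) (hΩb : Bornology.IsBounded Ω)
    -- Ω has smooth boundary: it is a regular sublevel set of a smooth function
    (hΩsm : ∃ F : EuclideanSpace ℝ (Fin N) → ℝ, ContDiff ℝ (⊤:ℕ∞) F ∧
      Ω = {x | F x < 0} ∧ ∀ x ∈ frontier Ω, fderiv ℝ F x ≠ 0)
    (h : EuclideanSpace ℝ (Fin N) → EuclideanSpace ℝ (Fin M) → ℝ)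
    (hcont : ContinuousOn (fun z : EuclideanSpace ℝ (Fin N) × EuclideanSpace ℝ (Fin M) =>
      h z.1 z.2) (Ω ×ˢ univ))
    -- (i) h(x,y) = o(|y|²) as y → 0, uniformly in x ∈ Ω
    (hsmall : ∀ ε' : ℝ, 0 < ε' → ∃ ρ : ℝ, 0 < ρ ∧
      ∀ x ∈ Ω, ∀ y : EuclideanSpace ℝ (Fin M), 0 < ‖y‖ → ‖y‖ ≤ ρ →
        |h x y| ≤ ε' * ‖y‖ ^ 2)
    -- (ii) subcritical lower bound
    (hlow : ∃ C : ℝ, 0 < C ∧ ∀ x ∈ Ω, ∀ y : EuclideanSpace ℝ (Fin M),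
      -C * ‖y‖ ^ 2 * (‖y‖ ^ (p - 2) + 1) ≤ h x y) :
    ∀ a : ℝ, 0 < a → ∃ δ : ℝ, 0 < δ ∧
      ∀ v : EuclideanSpace ℝ (Fin N) → EuclideanSpace ℝ (Fin M),
        ContDiff ℝ (⊤:ℕ∞) v → HasCompactSupport v → tsupport v ⊆ Ω →
        0 < H1 Ω v → H1 Ω v ≤ δ ^ 2 →
        -a * H1 Ω v ≤ ∫ x in Ω, h x (v x) := by
  -- h vanishes at y = 0 on Ω
  have hzero : ∀ x ∈ Ω, h x 0 = 0 := by
    intro x hx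
    obtain ⟨ρ₁, hρ₁, hb⟩ := hsmall 1 one_pos
    have hopen : IsOpen (Ω ×ˢ (univ : Set (EuclideanSpace ℝ (Fin M)))) := hΩo.prod isOpen_univ
    have hca : ContinuousAt (fun y => h x y) 0 := by
      have h1 : ContinuousAt (fun z : EuclideanSpace ℝ (Fin N) × EuclideanSpace ℝ (Fin M) =>
          h z.1 z.2) (x, 0) := hcont.continuousAt (hopen.mem_nhds ⟨hx, mem_univ _⟩)
      exact h1.comp ((continuous_const.prodMk continuous_id).continuousAt)
    set e : EuclideanSpace ℝ (Fin M) := EuclideanSpace.single (⟨0, hM⟩ : Fin M) (1:ℝ) with he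
    have hne : ‖e‖ = 1 := by rw [he, EuclideanSpace.norm_single]; norm_num
    have hsm : Filter.Tendsto (fun t : ℝ => t • e) (nhdsWithin 0 (Ioi 0)) (nhds 0) := by
      have hc : Continuous (fun t : ℝ => t • e) := continuous_id.smul continuous_const
      have : Filter.Tendsto (fun t : ℝ => t • e) (nhds 0) (nhds 0) := by
        have := hc.tendsto 0
        simpa using this
      exact this.mono_left nhdsWithin_le_nhds
    have ht1 : Filter.Tendsto (fun t : ℝ => h x (t • e)) (nhdsWithin 0 (Ioi 0))
        (nhds (h x 0)) := (hca.tendsto).comp hsm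
    have ht2 : Filter.Tendsto (fun t : ℝ => h x (t • e)) (nhdsWithin 0 (Ioi 0)) (nhds 0) := by
      apply squeeze_zero_norm' (a := fun t : ℝ => t ^ 2)
      · filter_upwards [Ioo_mem_nhdsGT_of_mem (show (0:ℝ) ∈ Ico 0 ρ₁ from ⟨le_refl _, hρ₁⟩)]
        intro t ht
        have hnorm : ‖t • e‖ = t := by
          rw [norm_smul, hne, mul_one, Real.norm_eq_abs, abs_of_pos ht.1]
        have := hb x hx (t • e) (by rw [hnorm]; exact ht.1) (by rw [hnorm]; exact ht.2.le)
        rw [hnorm] at this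
        simpa [Real.norm_eq_abs] using this
      · have : Filter.Tendsto (fun t : ℝ => t ^ 2) (nhds 0) (nhds 0) := by
          have := (continuous_pow 2 (M := ℝ)).tendsto 0
          simpa using this
        exact this.mono_left nhdsWithin_le_nhds
    exact tendsto_nhds_unique ht1 ht2
  intro a ha
  obtain ⟨C, hC, hClow⟩ := hlow
  obtain ⟨qR, p₀R, hq2, hpq, hp₀1, hp₀2, hp₀N, hsob⟩ := exponents N hN p hp hpc
  have hqRpos : (0:ℝ) < qR := by linarith
  have hp₀pos : (0:ℝ) < p₀R := by linarith
  set qn : ℝ≥0 := qR.toNNReal with hqn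
  set p₀n : ℝ≥0 := p₀R.toNNReal with hp₀n
  have hqn' : (qn:ℝ) = qR := Real.coe_toNNReal _ hqRpos.le
  have hp₀n' : (p₀n:ℝ) = p₀R := Real.coe_toNNReal _ hp₀pos.le
  obtain ⟨Cs, hCs, hSob⟩ := sobolev_pkg (M := M) Ω hΩb qn p₀n
    (by rw [hqn']; exact hq2)
    (by have : (1:ℝ) ≤ (p₀n:ℝ) := by rw [hp₀n']; exact hp₀1
        exact_mod_cast this)
    (by have : (p₀n:ℝ) ≤ 2 := by rw [hp₀n']; exact hp₀2
        exact_mod_cast this)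
    (by rw [hp₀n']; exact hp₀N)
    (by rw [hp₀n', hqn']; exact hsob)
  obtain ⟨ρ, hρ, hbound⟩ := hsmall (a/2) (by linarith)
  set K : ℝ := C * (ρ ^ (p - qR) + ρ ^ (2 - qR)) with hK
  have hKpos : 0 < K := by
    have h1 : (0:ℝ) < ρ ^ (p - qR) := Real.rpow_pos_of_pos hρ _
    have h2 : (0:ℝ) < ρ ^ (2 - qR) := Real.rpow_pos_of_pos hρ _
    positivity
  set δ₀ : ℝ := (a / (2 * K * Cs)) ^ (qR - 2)⁻¹ with hδ₀def
  have hδ₀ : 0 < δ₀ := by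
    have : (0:ℝ) < a / (2 * K * Cs) := by positivity
    exact Real.rpow_pos_of_pos this _
  refine ⟨δ₀, hδ₀, ?_⟩
  intro v hv hvc hvs hH1pos hH1le
  have hvcont := hv.continuous
  -- pointwise lower bound
  have hpt : ∀ x ∈ Ω, -((a/2) * ‖v x‖ ^ 2 + K * ‖v x‖ ^ qR) ≤ h x (v x) := by
    intro x hx
    rcases eq_or_ne (v x) 0 with hvx | hvx
    · rw [hvx, hzero x hx]
      have h0q : (0:ℝ) ^ qR = 0 := Real.zero_rpow (ne_of_gt hqRpos)
      simp [h0q]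
    · have ht : 0 < ‖v x‖ := norm_pos_iff.mpr hvx
      by_cases hle : ‖v x‖ ≤ ρ
      · have hab := hbound x hx (v x) ht hle
        have h1 : 0 ≤ K * ‖v x‖ ^ qR := by positivity
        have h2 := (abs_le.mp hab).1
        linarith
      · push_neg at hle
        have hlow' := hClow x hx (v x)
        set t := ‖v x‖ with htdef
        have hb2 : C * t ^ 2 * (t ^ (p - 2) + 1) ≤ K * t ^ qR := by
          have e1 : (t:ℝ) ^ (2:ℕ) = t ^ (2:ℝ) := (Real.rpow_two t).symm
          have e2 : t ^ (2:ℝ) * t ^ (p - 2) = t ^ p := by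
            rw [← Real.rpow_add ht]; ring_nf
          have htq : (0:ℝ) < t ^ qR := Real.rpow_pos_of_pos ht _
          have e3 : t ^ p ≤ ρ ^ (p - qR) * t ^ qR := by
            have h5 : t ^ p = t ^ (p - qR) * t ^ qR := by
              rw [← Real.rpow_add ht]; ring_nf
            have h6 : t ^ (p - qR) ≤ ρ ^ (p - qR) :=
              Real.rpow_le_rpow_of_nonpos hρ hle.le (by linarith)
            rw [h5]
            exact mul_le_mul_of_nonneg_right h6 htq.le
          have e4 : t ^ (2:ℝ) ≤ ρ ^ (2 - qR) * t ^ qR := by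
            have h5 : t ^ (2:ℝ) = t ^ (2 - qR) * t ^ qR := by
              rw [← Real.rpow_add ht]; ring_nf
            have h6 : t ^ (2 - qR) ≤ ρ ^ (2 - qR) :=
              Real.rpow_le_rpow_of_nonpos hρ hle.le (by linarith)
            rw [h5]
            exact mul_le_mul_of_nonneg_right h6 htq.le
          calc C * t ^ 2 * (t ^ (p - 2) + 1) = C * (t ^ (2:ℝ) * t ^ (p - 2)) + C * t ^ (2:ℝ) := by
                rw [← e1]; ring
            _ = C * t ^ p + C * t ^ (2:ℝ) := by rw [e2]
            _ ≤ C * (ρ ^ (p - qR) * t ^ qR) + C * (ρ ^ (2 - qR) * t ^ qR) := by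
                have := mul_le_mul_of_nonneg_left e3 hC.le
                have := mul_le_mul_of_nonneg_left e4 hC.le
                gcongr
            _ = K * t ^ qR := by rw [hK]; ring
        have hnn : 0 ≤ (a/2) * t ^ 2 := by positivity
        have : -C * t ^ 2 * (t ^ (p - 2) + 1) = -(C * t ^ 2 * (t ^ (p - 2) + 1)) := by ring
        rw [this] at hlow'
        linarith
  -- integrability facts
  have hgs_cont : Continuous (gradSq v) := gradSq_continuous hv
  have hgs_hcs : HasCompactSupport (gradSq v) :=
    HasCompactSupport.intro hvc fun x hx => gradSq_zero_of_nmem hx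
  have hgs_int : Integrable (gradSq v) volume := hgs_cont.integrable_of_hasCompactSupport hgs_hcs
  have hv2_int : Integrable (fun x => ‖v x‖ ^ 2) volume := by
    have hv2_hcs : HasCompactSupport (fun x => ‖v x‖ ^ 2) :=
      hvc.comp_left (g := fun w : EuclideanSpace ℝ (Fin M) => ‖w‖ ^ 2) (by simp)
    exact ((hvcont.norm).pow 2).integrable_of_hasCompactSupport hv2_hcs
  have hvq_int : Integrable (fun x => ‖v x‖ ^ qR) volume := by
    apply (hvcont.norm.rpow_const fun x => Or.inr hqRpos.le).integrable_of_hasCompactSupport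
    exact hvc.comp_left (g := fun w : EuclideanSpace ℝ (Fin M) => ‖w‖ ^ qR)
      (by simp [Real.zero_rpow (ne_of_gt hqRpos)])
  -- integrability of h (x, v x) on Ω
  have hf1cont : ContinuousOn (fun x => h x (v x)) Ω := by
    have h1 : ContinuousOn (fun x => (x, v x)) Ω := (continuous_id.prodMk hvcont).continuousOn
    exact hcont.comp h1 fun x hx => ⟨hx, mem_univ _⟩
  have hf1K : IntegrableOn (fun x => h x (v x)) (tsupport v) :=
    (hf1cont.mono hvs).integrableOn_compact hvc
  have hf1O : IntegrableOn (fun x => h x (v x)) Ω := by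
    have hsub : Ω ⊆ tsupport v ∪ (Ω \ tsupport v) := fun x hx =>
      (em (x ∈ tsupport v)).elim Or.inl fun h' => Or.inr ⟨hx, h'⟩
    apply IntegrableOn.mono_set _ hsub
    apply hf1K.union
    apply (integrableOn_zero (μ := volume)).congr_fun ?_
      ((hΩo.measurableSet).diff (isClosed_tsupport v).measurableSet)
    intro x hx
    have hvx : v x = 0 := image_eq_zero_of_notMem_tsupport hx.2
    show (0:ℝ) = h x (v x)
    rw [hvx, hzero x hx.1]
  -- lower bound function integrable
  have hg_int : IntegrableOn (fun x => -((a/2) * ‖v x‖ ^ 2 + K * ‖v x‖ ^ qR)) Ω :=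
    (((hv2_int.const_mul (a/2)).add (hvq_int.const_mul K)).neg).integrableOn
  -- compare integrals
  have hmono : ∫ x in Ω, -((a/2) * ‖v x‖ ^ 2 + K * ‖v x‖ ^ qR) ≤ ∫ x in Ω, h x (v x) :=
    setIntegral_mono_on hg_int hf1O hΩo.measurableSet hpt
  have hsplit : ∫ x in Ω, -((a/2) * ‖v x‖ ^ 2 + K * ‖v x‖ ^ qR) =
      -((a/2) * (∫ x in Ω, ‖v x‖ ^ 2) + K * (∫ x in Ω, ‖v x‖ ^ qR)) := by
    rw [integral_neg, integral_add ((hv2_int.const_mul (a/2)).restrict)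
      ((hvq_int.const_mul K).restrict), integral_const_mul, integral_const_mul]
  -- the two integral bounds
  have hH1eq : H1 Ω v = (∫ x in Ω, gradSq v x) + ∫ x in Ω, ‖v x‖ ^ 2 := by
    unfold H1
    rw [integral_add (hgs_int.restrict) (hv2_int.restrict)]
  have hIv2 : ∫ x in Ω, ‖v x‖ ^ 2 ≤ H1 Ω v := by
    have h2 : 0 ≤ ∫ x in Ω, gradSq v x := integral_nonneg (gradSq_nonneg v)
    linarith [hH1eq]
  have hIvq : ∫ x in Ω, ‖v x‖ ^ qR ≤ Cs * (H1 Ω v) ^ (qR / 2) := by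
    have := hSob v hv hvc hvs
    rw [hqn'] at this
    exact this
  -- numeric estimate
  set S : ℝ := H1 Ω v with hSdef
  have hSd : S ≤ δ₀ ^ 2 := hH1le
  have hb3 : S ^ (qR / 2) ≤ S * δ₀ ^ (qR - 2) := by
    have hsum : S ^ (qR / 2) = S ^ (1:ℝ) * S ^ (qR / 2 - 1) := by
      rw [← Real.rpow_add hH1pos]; ring_nf
    have h4 : S ^ (qR / 2 - 1) ≤ δ₀ ^ (qR - 2) := by
      calc S ^ (qR / 2 - 1) ≤ (δ₀ ^ 2) ^ (qR / 2 - 1) :=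
            Real.rpow_le_rpow hH1pos.le hSd (by linarith)
        _ = δ₀ ^ (qR - 2) := by
            rw [← Real.rpow_natCast δ₀ 2, ← Real.rpow_mul hδ₀.le]
            congr 1
            push_cast
            ring
    rw [hsum, Real.rpow_one]
    exact mul_le_mul_of_nonneg_left h4 hH1pos.le
  have hb4 : K * Cs * δ₀ ^ (qR - 2) = a / 2 := by
    rw [hδ₀def, ← Real.rpow_mul (by positivity), inv_mul_cancel₀ (by linarith : qR - 2 ≠ 0),
      Real.rpow_one]
    field_simp
  have key : (a/2) * (∫ x in Ω, ‖v x‖ ^ 2) + K * (∫ x in Ω, ‖v x‖ ^ qR) ≤ a * S := by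
    have b1 : (a/2) * (∫ x in Ω, ‖v x‖ ^ 2) ≤ (a/2) * S :=
      mul_le_mul_of_nonneg_left hIv2 (by linarith)
    have b2 : K * (∫ x in Ω, ‖v x‖ ^ qR) ≤ K * (Cs * S ^ (qR / 2)) :=
      mul_le_mul_of_nonneg_left hIvq hKpos.le
    have b3 : K * (Cs * S ^ (qR / 2)) ≤ K * Cs * δ₀ ^ (qR - 2) * S := by
      have := mul_le_mul_of_nonneg_left hb3 (by positivity : (0:ℝ) ≤ K * Cs)
      calc K * (Cs * S ^ (qR / 2)) = K * Cs * S ^ (qR / 2) := by ring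
        _ ≤ K * Cs * (S * δ₀ ^ (qR - 2)) := by
            exact mul_le_mul_of_nonneg_left hb3 (by positivity)
        _ = K * Cs * δ₀ ^ (qR - 2) * S := by ring
    rw [hb4] at b3
    linarith
  calc -a * H1 Ω v = -(a * S) := by rw [hSdef]; ring
    _ ≤ -((a/2) * (∫ x in Ω, ‖v x‖ ^ 2) + K * (∫ x in Ω, ‖v x‖ ^ qR)) := by linarith
    _ = ∫ x in Ω, -((a/2) * ‖v x‖ ^ 2 + K * ‖v x‖ ^ qR) := hsplit.symm
    _ ≤ ∫ x in Ω, h x (v x) := hmono
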